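/- (Weil's theorem, finite restriction version) There is no nonzero σ-additive Borel measure μ on an infinite-dimensional separable real Hilbert space E that is translation invariant and assigns finite positive measure to some open ball: if μ is translation invariant (μ(A + h) = μ(A) for all Borel A and h ∈ E) and μ(B) < ∞ for every open ball B, then μ = 0. -/

import Mathlib

/-!
By Riesz's lemma, an infinite-dimensional normed space contains a bounded sequence of points at
mutual distance at least `1`. The balls of radius `1/2` around them are disjoint, lie in one ball
of finite measure and, by translation invariance, all have the measure of `ball 0 (1/2)`, which
must therefore vanish. Every ball of radius `1/2` is then null, and countably many of them cover
the (separable) space.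
-/

open MeasureTheory Metric Set Function
open scoped ENNReal

namespace MeasureTheory

theorem measure_eq_zero_of_pairwise_disjoint_subset {α ι : Type*} [MeasurableSpace α]
    [Countable ι] [Infinite ι] {μ : Measure α} {s : ι → Set α} {t : Set α} {m : ℝ≥0∞}
    (hs : ∀ i, MeasurableSet (s i)) (hd : Pairwise (Disjoint on s)) (hst : ∀ i, s i ⊆ t)
    (ht : μ t ≠ ∞) (hm : ∀ i, μ (s i) = m) : m = 0 := by
  by_contra hm0
  have : ∑' i, μ (s i) ≤ μ t := by
    rw [← measure_iUnion hd hs]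
    exact measure_mono (iUnion_subset hst)
  rw [tsum_congr hm, ENNReal.tsum_const_eq_top_of_ne_zero hm0, top_le_iff] at this
  exact ht this

namespace Measure

theorem isAddRightInvariant_of_measure_image_add_right {G : Type*} [AddGroup G]
    [MeasurableSpace G] [MeasurableAdd G] (μ : Measure G)
    (h : ∀ (A : Set G) (g : G), MeasurableSet A → μ ((· + g) '' A) = μ A) :
    μ.IsAddRightInvariant :=
  (forall_measure_preimage_add_right_iff μ).1 fun g A hA => by
    simpa only [image_add_right, neg_neg] using h A (-g) hA

variable {E : Type*} [MeasurableSpace E]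

theorem measure_ball_eq_measure_ball_zero [SeminormedAddCommGroup E] [BorelSpace E]
    (μ : Measure E) [μ.IsAddRightInvariant] (x : E) (r : ℝ) :
    μ (ball x r) = μ (ball 0 r) := by
  rw [← measure_preimage_add_right μ x, preimage_add_right_ball, sub_self]

theorem measure_ball_zero_half_eq_zero_of_not_finiteDimensional (𝕜 : Type*)
    [NontriviallyNormedField 𝕜] [CompleteSpace 𝕜] [NormedAddCommGroup E] [NormedSpace 𝕜 E]
    [BorelSpace E]
    (μ : Measure E) [μ.IsAddRightInvariant] (hE : ¬ FiniteDimensional 𝕜 E)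
    (hfin : ∀ r, 0 < r → μ (ball 0 r) < ∞) : μ (ball 0 (1 / 2)) = 0 := by
  obtain ⟨R, f, hR, hfR, hf⟩ := exists_seq_norm_le_one_le_norm_sub (𝕜 := 𝕜) hE
  refine measure_eq_zero_of_pairwise_disjoint_subset (s := fun n ↦ ball (f n) (1 / 2))
    (fun _ ↦ measurableSet_ball) (fun m n hmn ↦ ball_disjoint_ball ?_) (fun n ↦ ?_)
    (hfin (R + 1) (by linarith)).ne (fun n ↦ measure_ball_eq_measure_ball_zero μ (f n) _)
  · rw [dist_eq_norm]
    linarith [hf hmn]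
  · refine ball_subset_ball' ?_
    rw [dist_zero_right]
    linarith [hfR n]

theorem eq_zero_of_measure_ball_zero_eq_zero [SeminormedAddCommGroup E]
    [SecondCountableTopology E] [BorelSpace E] (μ : Measure E) [μ.IsAddRightInvariant] {r : ℝ}
    (hr : 0 < r) (h : μ (ball 0 r) = 0) : μ = 0 :=
  measure_univ_eq_zero.1 <| measure_null_of_locally_null univ fun x _ ↦
    ⟨ball x r, mem_nhdsWithin_of_mem_nhds (ball_mem_nhds x hr),
      (measure_ball_eq_measure_ball_zero μ x r).trans h⟩

theorem eq_zero_of_not_finiteDimensional (𝕜 : Type*)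
    [NontriviallyNormedField 𝕜] [CompleteSpace 𝕜] [NormedAddCommGroup E] [NormedSpace 𝕜 E]
    [SecondCountableTopology E] [BorelSpace E]
    (μ : Measure E) [μ.IsAddRightInvariant] (hE : ¬ FiniteDimensional 𝕜 E)
    (hfin : ∀ r, 0 < r → μ (ball 0 r) < ∞) : μ = 0 :=
  eq_zero_of_measure_ball_zero_eq_zero μ one_half_pos
    (measure_ball_zero_half_eq_zero_of_not_finiteDimensional 𝕜 μ hE hfin)

end Measure

end MeasureTheory

theorem stmt3_general {E : Type*} [NormedAddCommGroup E] [InnerProductSpace ℝ E]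
    [TopologicalSpace.SeparableSpace E]
    [MeasurableSpace E] [BorelSpace E]
    (hinf : ¬ FiniteDimensional ℝ E)
    (μ : Measure E)
    (hinv : ∀ (A : Set E) (h : E), MeasurableSet A → μ ((fun a => a + h) '' A) = μ A)
    (hball : ∀ (x : E) (r : ℝ), 0 < r → μ (Metric.ball x r) < ⊤) :
    μ = 0 := by
  have := Measure.isAddRightInvariant_of_measure_image_add_right μ hinv
  exact Measure.eq_zero_of_not_finiteDimensional ℝ μ hinf fun r ↦ hball 0 r

/-- Weil's theorem (finite-on-balls version): on an infinite-dimensional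
separable real Hilbert space there is no nonzero translation-invariant Borel
measure which is finite on open balls. -/
theorem stmt3 {E : Type*} [NormedAddCommGroup E] [InnerProductSpace ℝ E]
    [CompleteSpace E] [TopologicalSpace.SeparableSpace E]
    [MeasurableSpace E] [BorelSpace E]
    (hinf : ¬ FiniteDimensional ℝ E)
    (μ : Measure E)
    (hinv : ∀ (A : Set E) (h : E), MeasurableSet A → μ ((fun a => a + h) '' A) = μ A)
    (hball : ∀ (x : E) (r : ℝ), 0 < r → μ (Metric.ball x r) < ⊤) :
    μ = 0 :=
  stmt3_general hinf μ hinv hball
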